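/- arXiv:2208.04931 — 2 statements merged into one kernel-verified Lean document; each statement's English description precedes it below -/
import Mathlib

section
/- Let D be a deterministic finite automaton (over a finite linearly ordered alphabet Σ) with a single initial state s, in which every state is reachable from s and from every state some final state is reachable, and let u ≠ v be states. Say that a pair of states (u', v') precedes (u, v) if u' ≠ v' and there exists a (possibly empty) word γ with δ(u', γ) = u and δ(v', γ) = v. Then u <_D v holds if and only if for every pair (u', v') preceding (u, v) it holds a ⪯ b for every a ∈ λ(u') and every b ∈ λ(v'). -/
/-- Strict co-lexicographic order on words: compare reversed words lexicographically. -/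
def colexLt {A : Type} [LinearOrder A] (α β : List A) : Prop :=
  List.Lex (· < ·) α.reverse β.reverse

/-- Co-lexicographic order (reflexive version). -/
def colexLe {A : Type} [LinearOrder A] (α β : List A) : Prop :=
  colexLt α β ∨ α = β

/-- The prefix closure of a language. -/
def Pref {A : Type} (L : Set (List A)) : Set (List A) :=
  {α | ∃ γ : List A, α ++ γ ∈ L}

/-- The Myhill–Nerode equivalence of a language. -/
def NerodeEq {A : Type} (L : Set (List A)) (α β : List A) : Prop :=
  ∀ γ : List A, α ++ γ ∈ L ↔ β ++ γ ∈ L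

/-- A monotone (nondecreasing or nonincreasing) sequence of words w.r.t. co-lex order. -/
def MonotoneSeq {A : Type} [LinearOrder A] (α : ℕ → List A) : Prop :=
  (∀ i, colexLe (α i) (α (i + 1))) ∨ (∀ i, colexLe (α (i + 1)) (α i))

/-- A partition of the state set into `p` chains with respect to the relation `le`. -/
def IsChainPartition {Q : Type} (le : Q → Q → Prop) (p : ℕ) (f : Fin p → Set Q) : Prop :=
  (∀ q : Q, ∃! i : Fin p, q ∈ f i) ∧
  ∀ i : Fin p, ∀ u ∈ f i, ∀ v ∈ f i, le u v ∨ le v u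

/-- A deterministic finite automaton (with possibly undefined transitions). -/
structure DFA' (A Q : Type) where
  start : Q
  delta : Q → A → Option Q
  accept : Set Q

namespace DFA'

variable {A Q : Type}

/-- Extended (partial) transition function on words. -/
def deltaStar (D : DFA' A Q) : Q → List A → Option Q
  | q, [] => some q
  | q, a :: w => (D.delta q a).bind fun r => D.deltaStar r w

/-- `D.Iq q` is the set of words reaching `q` from the initial state. -/
def Iq (D : DFA' A Q) (q : Q) : Set (List A) :=
  {α | D.deltaStar D.start α = some q}

/-- The accepted language. -/
def lang (D : DFA' A Q) : Set (List A) :=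
  {α | ∃ q ∈ D.accept, D.deltaStar D.start α = some q}

/-- Labels of transitions entering a state, with the extra bottom symbol `#`
added exactly for the initial state. -/
def lam (D : DFA' A Q) (q : Q) : Set (WithBot A) :=
  {x | ∃ (a : A) (u : Q), x = (a : WithBot A) ∧ D.delta u a = some q} ∪
    {x | q = D.start ∧ x = (⊥ : WithBot A)}

/-- Every state is reachable from the initial state. -/
def Reachable (D : DFA' A Q) : Prop :=
  ∀ q : Q, ∃ α : List A, D.deltaStar D.start α = some q

/-- Every state can reach a final state. -/
def Useful (D : DFA' A Q) : Prop :=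
  ∀ q : Q, ∃ (β : List A) (f : Q), f ∈ D.accept ∧ D.deltaStar q β = some f

/-- The relation `≤_D`: `u ≤_D v` iff `u = v` or every word reaching `u` is
co-lexicographically strictly smaller than every word reaching `v`. -/
def leD [LinearOrder A] (D : DFA' A Q) (u v : Q) : Prop :=
  u = v ∨ ∀ α ∈ D.Iq u, ∀ β ∈ D.Iq v, colexLt α β

/-- The strict relation `<_D`. -/
def ltD [LinearOrder A] (D : DFA' A Q) (u v : Q) : Prop :=
  u ≠ v ∧ ∀ α ∈ D.Iq u, ∀ β ∈ D.Iq v, colexLt α β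

/-- A set of states of a DFA is entangled if some monotone sequence of words of
`Pref (L(D))` visits every state of the set infinitely often. -/
def Entangled [LinearOrder A] (D : DFA' A Q) (Q' : Set Q) : Prop :=
  ∃ α : ℕ → List A, (∀ i, α i ∈ Pref D.lang) ∧ MonotoneSeq α ∧
    ∀ q ∈ Q', {i : ℕ | D.deltaStar D.start (α i) = some q}.Infinite

end DFA'

/-- A co-lex order on a DFA: a partial order on the states satisfying Axioms 1 and 2. -/
structure IsColexDFA {A Q : Type} [LinearOrder A] (D : DFA' A Q) (le : Q → Q → Prop) : Prop where
  refl : ∀ u, le u u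
  antisymm : ∀ u v, le u v → le v u → u = v
  trans : ∀ u v w, le u v → le v w → le u w
  ax1 : ∀ u v, le u v → u ≠ v → ∀ a ∈ D.lam u, ∀ b ∈ D.lam v, a ≤ b
  ax2 : ∀ (a : A) (u v u' v' : Q),
      D.delta u' a = some u → D.delta v' a = some v → le u v → u ≠ v → le u' v'

/-- The pair `(u', v')` precedes the pair `(u, v)` in the DFA `D`. -/
def Precedes {A Q : Type} (D : DFA' A Q) (u' v' u v : Q) : Prop :=
  u' ≠ v' ∧ ∃ γ : List A, D.deltaStar u' γ = some u ∧ D.deltaStar v' γ = some v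

theorem DFA'.deltaStar_append {A Q : Type} (D : DFA' A Q) (q : Q) (α β : List A) :
    D.deltaStar q (α ++ β) = (D.deltaStar q α).bind (fun r => D.deltaStar r β) := by
  induction α generalizing q with
  | nil => simp [DFA'.deltaStar]
  | cons a α ih =>
    simp only [List.cons_append, DFA'.deltaStar]
    cases D.delta q a with
    | none => simp
    | some r => simp [ih]

theorem lex_append_iff {A : Type} [LinearOrder A] (l s1 s2 : List A) :
    List.Lex (· < ·) (l ++ s1) (l ++ s2) ↔ List.Lex (· < ·) s1 s2 := by
  induction l with
  | nil => exact Iff.rfl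
  | cons x l ih =>
    constructor
    · intro h
      cases h with
      | rel h => exact absurd h (lt_irrefl x)
      | cons h => exact ih.mp h
    · intro h
      exact List.Lex.cons (ih.mpr h)

/-- helper for snoc form of deltaStar from start -/
theorem DFA'.deltaStar_snoc {A Q : Type} (D : DFA' A Q) (q q' : Q) (α : List A) (a : A)
    (h : D.deltaStar q (α ++ [a]) = some q') :
    ∃ p, D.deltaStar q α = some p ∧ D.delta p a = some q' := by
  rw [DFA'.deltaStar_append] at h
  cases hα : D.deltaStar q α with
  | none => rw [hα] at h; simp at h
  | some p =>
    rw [hα] at h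
    simp only [Option.bind_some, DFA'.deltaStar] at h
    simp only [Option.bind_fun_some] at h
    exact ⟨p, rfl, h⟩

theorem stmt6_key {A Q : Type} [LinearOrder A] (D : DFA' A Q)
    (u v : Q) (hne : u ≠ v)
    (H : ∀ u' v' : Q, Precedes D u' v' u v →
        ∀ a ∈ D.lam u', ∀ b ∈ D.lam v', a ≤ b) :
    ∀ (ra rb γ : List A) (u' v' : Q),
      D.deltaStar D.start ra.reverse = some u' →
      D.deltaStar D.start rb.reverse = some v' →
      D.deltaStar u' γ = some u → D.deltaStar v' γ = some v →
      List.Lex (· < ·) ra rb := by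
  intro ra
  induction ra with
  | nil =>
    intro rb γ u' v' hu' hv' hγu hγv
    -- u' = start
    simp [DFA'.deltaStar] at hu'
    cases rb with
    | nil =>
      simp [DFA'.deltaStar] at hv'
      exact absurd (by rw [← hu', hv'] at hγu; rw [hγu] at hγv; exact Option.some.inj hγv) hne
    | cons y rb' => exact List.Lex.nil
  | cons x ra' ih =>
    intro rb γ u' v' hu' hv' hγu hγv
    simp only [List.reverse_cons] at hu'
    obtain ⟨p, hp, hpx⟩ := D.deltaStar_snoc _ _ _ _ hu'
    have hxlam : (x : WithBot A) ∈ D.lam u' := Or.inl ⟨x, p, rfl, hpx⟩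
    have hne' : u' ≠ v' := fun h => hne (by rw [h] at hγu; rw [hγu] at hγv; exact Option.some.inj hγv)
    have hprec : Precedes D u' v' u v := ⟨hne', γ, hγu, hγv⟩
    cases rb with
    | nil =>
      simp [DFA'.deltaStar] at hv'
      have hblam : (⊥ : WithBot A) ∈ D.lam v' := Or.inr ⟨hv'.symm, rfl⟩
      have := H u' v' hprec _ hxlam _ hblam
      exact absurd this (by simp)
    | cons y rb' =>
      simp only [List.reverse_cons] at hv'
      obtain ⟨r, hr, hry⟩ := D.deltaStar_snoc _ _ _ _ hv'
      have hylam : (y : WithBot A) ∈ D.lam v' := Or.inl ⟨y, r, rfl, hry⟩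
      rcases lt_trichotomy x y with hlt | heq | hgt
      · exact List.Lex.rel hlt
      · subst heq
        have hpr : p ≠ r := by
          intro h
          apply hne'
          rw [h] at hpx
          rw [hpx] at hry
          exact Option.some.inj hry
        refine List.Lex.cons (ih rb' (x :: γ) p r hp hr ?_ ?_)
        · show (D.delta p x).bind (fun s => D.deltaStar s γ) = some u
          rw [hpx]; exact hγu
        · show (D.delta r x).bind (fun s => D.deltaStar s γ) = some v
          rw [hry]; exact hγv
      · have := H u' v' hprec _ hxlam _ hylam
        rw [WithBot.coe_le_coe] at this
        exact absurd this (not_le.mpr hgt)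

/-- characterization of `<_D` via preceding pairs. -/
theorem stmt_6 {A Q : Type} [LinearOrder A] [Fintype A] [Fintype Q]
    (D : DFA' A Q) (hreach : D.Reachable) (huse : D.Useful)
    (u v : Q) (hne : u ≠ v) :
    D.ltD u v ↔
      ∀ u' v' : Q, Precedes D u' v' u v →
        ∀ a ∈ D.lam u', ∀ b ∈ D.lam v', a ≤ b := by
  constructor
  · rintro ⟨-, h⟩ u' v' ⟨hne', γ, hγu, hγv⟩ a ha b hb
    rcases ha with ⟨a0, p, rfl, hpa⟩ | ⟨hstart, rfl⟩
    swap
    · exact bot_le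
    obtain ⟨α, hα⟩ := hreach p
    have hαu : (α ++ a0 :: γ) ∈ D.Iq u := by
      show D.deltaStar D.start (α ++ a0 :: γ) = some u
      rw [DFA'.deltaStar_append, hα]
      show (D.delta p a0).bind (fun s => D.deltaStar s γ) = some u
      rw [hpa]; exact hγu
    rcases hb with ⟨b0, r, rfl, hrb⟩ | ⟨hstart, rfl⟩
    · obtain ⟨β, hβ⟩ := hreach r
      have hβv : (β ++ b0 :: γ) ∈ D.Iq v := by
        show D.deltaStar D.start (β ++ b0 :: γ) = some v
        rw [DFA'.deltaStar_append, hβ]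
        show (D.delta r b0).bind (fun s => D.deltaStar s γ) = some v
        rw [hrb]; exact hγv
      have hlex := h _ hαu _ hβv
      unfold colexLt at hlex
      rw [List.reverse_append, List.reverse_append, List.reverse_cons, List.reverse_cons,
        List.append_assoc, List.append_assoc] at hlex
      simp only [List.singleton_append] at hlex
      rw [lex_append_iff] at hlex
      cases hlex with
      | rel h => exact WithBot.coe_le_coe.mpr h.le
      | cons h => exact le_refl _
    · -- v' = start, so γ ∈ Iq v
      have hγv' : γ ∈ D.Iq v := by rw [hstart] at hγv; exact hγv
      have hlex := h _ hαu _ hγv'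
      unfold colexLt at hlex
      rw [List.reverse_append, List.reverse_cons, List.append_assoc] at hlex
      simp only [List.singleton_append] at hlex
      have : List.Lex (· < ·) (γ.reverse ++ (a0 :: α.reverse)) (γ.reverse ++ []) := by
        simpa using hlex
      rw [lex_append_iff] at this
      cases this
  · intro H
    refine ⟨hne, fun α hα β hβ => ?_⟩
    exact stmt6_key D u v hne H α.reverse β.reverse [] u v
      (by simpa [DFA'.Iq] using hα) (by simpa [DFA'.Iq] using hβ) rfl rfl
end

section
/- Let D be a deterministic finite automaton (over a finite linearly ordered alphabet Σ) with a single initial state s, every state reachable from s and every state able to reach a final state. If Q' is a set of states that is entangled in D, then for every co-lex order ≤ on D and every ≤-chain partition of the states of D into p chains, the cardinality of Q' is at most p. (In particular, ent(D) ≤ width(D), and any two distinct states belonging to a common entangled set are ≤-incomparable.) -/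
lemma colexLt_trans {A : Type} [LinearOrder A] {a b c : List A}
    (h1 : colexLt a b) (h2 : colexLt b c) : colexLt a c :=
  List.lex_trans (fun h₁ h₂ => lt_trans h₁ h₂) h1 h2

lemma colexLt_asymm {A : Type} [LinearOrder A] {a b : List A}
    (h1 : colexLt a b) (h2 : colexLt b a) : False :=
  asymm_of (List.Lex (· < ·)) h1 h2

lemma colexLe_trans {A : Type} [LinearOrder A] {a b c : List A}
    (h1 : colexLe a b) (h2 : colexLe b c) : colexLe a c := by
  rcases h1 with h1 | rfl
  · rcases h2 with h2 | rfl
    · exact Or.inl (colexLt_trans h1 h2)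
    · exact Or.inl h1
  · exact h2

namespace DFA'

lemma deltaStar_append_s7 {A Q : Type} (D : DFA' A Q) (q : Q) (x y : List A) :
    D.deltaStar q (x ++ y) = (D.deltaStar q x).bind (fun r => D.deltaStar r y) := by
  induction x generalizing q with
  | nil => simp [deltaStar]
  | cons a x ih =>
    simp only [List.cons_append, deltaStar]
    cases D.delta q a with
    | none => simp
    | some r => simp [ih]

lemma deltaStar_concat {A Q : Type} (D : DFA' A Q) (q u : Q) (x : List A) (a : A)
    (h : D.deltaStar q (x ++ [a]) = some u) :
    ∃ u', D.deltaStar q x = some u' ∧ D.delta u' a = some u := by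
  rw [D.deltaStar_append_s7] at h
  cases hx : D.deltaStar q x with
  | none => rw [hx] at h; simp at h
  | some u' =>
    rw [hx] at h
    simp only [Option.bind_some, DFA'.deltaStar] at h
    cases hd : D.delta u' a with
    | none => rw [hd] at h; simp at h
    | some u'' =>
      rw [hd] at h
      simp only [Option.bind_some, DFA'.deltaStar] at h
      exact ⟨u', rfl, hd ▸ h⟩

end DFA'

/-- Key proposition: a co-lex order refines `≤_D` on distinct states. -/
lemma key_prop {A Q : Type} [LinearOrder A] (D : DFA' A Q) (le : Q → Q → Prop)
    (hcolex : IsColexDFA D le) :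
    ∀ n (α β : List A) (u v : Q), α.length + β.length ≤ n →
      le u v → u ≠ v →
      D.deltaStar D.start α = some u → D.deltaStar D.start β = some v →
      colexLt α β := by
  intro n
  induction n with
  | zero =>
    intro α β u v hlen hle hne hα hβ
    have hα0 : α = [] := List.eq_nil_of_length_eq_zero (by omega)
    have hβ0 : β = [] := List.eq_nil_of_length_eq_zero (by omega)
    subst hα0; subst hβ0
    simp [DFA'.deltaStar] at hα hβ
    exact absurd (hα.symm.trans hβ) hne
  | succ n ih =>
    intro α β u v hlen hle hne hα hβ
    rcases List.eq_nil_or_concat α with rfl | ⟨α', a, rfl⟩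
    · -- α = [], so u = start
      have hu : u = D.start := by
        simp [DFA'.deltaStar] at hα; exact hα.symm
      rcases List.eq_nil_or_concat β with rfl | ⟨β', b, rfl⟩
      · have hv : v = D.start := by
          simp [DFA'.deltaStar] at hβ; exact hβ.symm
        exact absurd (hu.trans hv.symm) hne
      · show List.Lex _ _ _
        rw [List.concat_eq_append, List.reverse_append]
        exact List.Lex.nil
    · -- α = α' ++ [a]
      rw [List.concat_eq_append] at hα hlen
      obtain ⟨u', hu', hda⟩ := D.deltaStar_concat _ _ _ _ hα
      have ha_lam : (a : WithBot A) ∈ D.lam u := Or.inl ⟨a, u', rfl, hda⟩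
      rcases List.eq_nil_or_concat β with rfl | ⟨β', b, rfl⟩
      · -- β = [], v = start, contradiction via ax1
        have hv : v = D.start := by
          simp [DFA'.deltaStar] at hβ; exact hβ.symm
        have hb_lam : (⊥ : WithBot A) ∈ D.lam v := Or.inr ⟨hv, rfl⟩
        have := hcolex.ax1 u v hle hne _ ha_lam _ hb_lam
        exact absurd this (not_le_of_gt (WithBot.bot_lt_coe a))
      · rw [List.concat_eq_append] at hβ hlen
        obtain ⟨v', hv', hdb⟩ := D.deltaStar_concat _ _ _ _ hβ
        have hb_lam : (b : WithBot A) ∈ D.lam v := Or.inl ⟨b, v', rfl, hdb⟩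
        have hab : (a : WithBot A) ≤ (b : WithBot A) :=
          hcolex.ax1 u v hle hne _ ha_lam _ hb_lam
        have hab' : a ≤ b := WithBot.coe_le_coe.mp hab
        rcases lt_or_eq_of_le hab' with hlt | rfl
        · show List.Lex _ _ _
          rw [List.concat_eq_append, List.concat_eq_append,
            List.reverse_append, List.reverse_append]
          exact List.Lex.rel hlt
        · -- a = b
          have hle' : le u' v' := hcolex.ax2 a u v u' v' hda hdb hle hne
          have hne' : u' ≠ v' := by
            rintro rfl
            rw [hda] at hdb
            exact hne (Option.some_injective _ hdb)
          have hlen' : α'.length + β'.length ≤ n := by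
            simp at hlen; omega
          have := ih α' β' u' v' hlen' hle' hne' hu' hv'
          show List.Lex _ _ _
          rw [List.concat_eq_append, List.concat_eq_append,
            List.reverse_append, List.reverse_append]
          exact List.Lex.cons this

/-- an entangled set of states of a DFA has cardinality at most the
number of chains of any chain partition of any co-lex order on the DFA. -/
theorem stmt_7 {A Q : Type} [LinearOrder A] [Fintype A] [Fintype Q]
    (D : DFA' A Q) (hreach : D.Reachable) (huse : D.Useful)
    (Q' : Set Q) (hent : D.Entangled Q')
    (le : Q → Q → Prop) (hcolex : IsColexDFA D le)
    (p : ℕ) (f : Fin p → Set Q) (hpart : IsChainPartition le p f) :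
    Q'.ncard ≤ p := by
  classical
  obtain ⟨α, _hpref, hmono, hinf⟩ := hent
  -- No two distinct states of Q' are comparable.
  have hincomp : ∀ u ∈ Q', ∀ v ∈ Q', u ≠ v → ¬ le u v := by
    intro u hu v hv hne hle
    have hkey : ∀ i j, D.deltaStar D.start (α i) = some u →
        D.deltaStar D.start (α j) = some v → colexLt (α i) (α j) := by
      intro i j hi hj
      exact key_prop D le hcolex _ (α i) (α j) u v le_rfl hle hne hi hj
    -- monotonicity: colexLe between indices
    have hmono' : (∀ i j, i ≤ j → colexLe (α i) (α j)) ∨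
        (∀ i j, i ≤ j → colexLe (α j) (α i)) := by
      rcases hmono with h | h
      · left; intro i j hij
        induction j with
        | zero => simp_all; exact Or.inr rfl
        | succ j ihj =>
          rcases Nat.lt_or_ge i (j+1) with hlt | hge
          · exact colexLe_trans (ihj (by omega)) (h j)
          · have : i = j + 1 := by omega
            subst this; exact Or.inr rfl
      · right; intro i j hij
        induction j with
        | zero => simp_all; exact Or.inr rfl
        | succ j ihj =>
          rcases Nat.lt_or_ge i (j+1) with hlt | hge
          · exact colexLe_trans (h j) (ihj (by omega))
          · have : i = j + 1 := by omega
            subst this; exact Or.inr rfl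
    have hu' := hinf u hu
    have hv' := hinf v hv
    rcases hmono' with h | h
    · -- nondecreasing: pick i with v, then j > i with u
      obtain ⟨i, hi⟩ := hv'.nonempty
      obtain ⟨j, hj, hji⟩ := hu'.exists_gt i
      simp only [Set.mem_setOf_eq] at hi hj
      have h1 : colexLe (α i) (α j) := h i j (le_of_lt hji)
      have h2 : colexLt (α j) (α i) := hkey j i hj hi
      rcases h1 with h1 | h1
      · exact colexLt_asymm h1 h2
      · rw [h1] at hi
        exact hne (Option.some_injective _ (hj.symm.trans hi))
    · obtain ⟨i, hi⟩ := hu'.nonempty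
      obtain ⟨j, hj, hji⟩ := hv'.exists_gt i
      simp only [Set.mem_setOf_eq] at hi hj
      have h1 : colexLe (α j) (α i) := h i j (le_of_lt hji)
      have h2 : colexLt (α i) (α j) := hkey i j hi hj
      rcases h1 with h1 | h1
      · exact colexLt_asymm h1 h2
      · rw [h1] at hj
        exact hne (Option.some_injective _ (hi.symm.trans hj))
  -- Map each element of Q' to its chain index, injectively.
  obtain ⟨huniq, hchain⟩ := hpart
  choose g hg using fun q => (huniq q).exists
  have hginj : ∀ u ∈ Q', ∀ v ∈ Q', g u = g v → u = v := by
    intro u hu v hv hgeq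
    by_contra hne
    have hcomp := hchain (g u) u (hg u) v (hgeq ▸ hg v)
    rcases hcomp with h | h
    · exact hincomp u hu v hv hne h
    · exact hincomp v hv u hu (Ne.symm hne) h
  have : Set.InjOn g Q' := fun u hu v hv h => hginj u hu v hv h
  have h1 : Q'.ncard = (g '' Q').ncard := (Set.ncard_image_of_injOn this).symm
  have h2 : (g '' Q').ncard ≤ (Set.univ : Set (Fin p)).ncard :=
    Set.ncard_le_ncard (Set.subset_univ _) Set.finite_univ
  rw [h1]
  simpa [Set.ncard_univ, Nat.card_eq_fintype_card] using h2
end
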